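/- Let q ≥ 3 and n ≥ 3. Then |C_q(n)| = M_{q−2}(n−1) − Σ_{k=⌈n/2⌉}^{n−1} Σ_{i=0}^{n−1−k} M_{q−2}(i)·M_{q−2}(k−2)·M_{q−2}(n−1−i−k). -/

import Mathlib

/-!
Read a word as a lattice path with steps `+1` (letter `1`), `-1` (letter `0`) and `0` (other
letters). An elevated factor of a Motzkin word `γ` sits inside an arch of `γ`, i.e. a factor
between two returns of the path to height `0` above which the path stays positive, and such an
arch is itself elevated. Distinct arches occupy disjoint intervals, so a word of length
`n - 1 < 2⌈n/2⌉` has at most one arch of length `k ≥ ⌈n/2⌉`. Hence the Motzkin words excluded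
from `C_q(n)` factor uniquely as `α e δ` with `α, δ` Motzkin and `e` elevated of length
`k ≥ ⌈n/2⌉`, and there are `M(i) M(k-2) M(n-1-i-k)` of them with `|α| = i`.
-/

/-- Value of a letter: 1 ↦ +1, 0 ↦ -1, other letters ↦ 0. -/
def mval (a : ℕ) : ℤ := if a = 1 then 1 else if a = 0 then -1 else 0

/-- Value-sum of a word. -/
def vsum (w : List ℕ) : ℤ := (w.map mval).sum

/-- A (q-2)-colored Motzkin word over the alphabet Z_q = {0,...,q-1}:
all letters < q, every prefix has nonnegative value-sum, total value-sum 0. -/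
def IsMotzkinWord (q : ℕ) (w : List ℕ) : Prop :=
  (∀ a ∈ w, a < q) ∧ (∀ u, u <+: w → 0 ≤ vsum u) ∧ vsum w = 0

/-- The set 𝓜_{q-2}(n) of (q-2)-colored Motzkin words of length n. -/
def MotzkinSet (q n : ℕ) : Set (List ℕ) := {w | w.length = n ∧ IsMotzkinWord q w}

/-- M_{q-2}(n), the number of (q-2)-colored Motzkin words of length n. -/
noncomputable def Mnum (q n : ℕ) : ℕ := (MotzkinSet q n).ncard

/-- The set Ê_{q-2}(n) of elevated (q-2)-colored Motzkin words of length n: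
words 1α0 with α ∈ 𝓜_{q-2}(n-2). -/
def ElevatedSet (q n : ℕ) : Set (List ℕ) :=
  {w | w.length = n ∧ ∃ α ∈ MotzkinSet q (n - 2), w = 1 :: (α ++ [0])}

/-- The set A_q(n). -/
def SetA (q n : ℕ) : Set (List ℕ) :=
  {w | ∃ i ≤ n / 2, ∃ α ∈ MotzkinSet q i, ∃ β ∈ ElevatedSet q (n - i), w = α ++ β} \
    {w | ∃ α ∈ ElevatedSet q (n / 2), ∃ β ∈ ElevatedSet q (n / 2), w = α ++ β}

/-- The set B_q(n). -/
def SetB (q n : ℕ) : Set (List ℕ) :=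
  {w | ∃ i ≤ n / 2 - 1, ∃ α ∈ MotzkinSet q i, ∃ β ∈ ElevatedSet q (n - i - 1),
    w = 1 :: (α ++ β)}

/-- The set C_q(n): words γ0 with γ a (q-2)-colored Motzkin word of length n-1
having no factor which is an elevated Motzkin word of length j ≥ ⌈n/2⌉. -/
def SetC (q n : ℕ) : Set (List ℕ) :=
  {w | ∃ γ ∈ MotzkinSet q (n - 1),
    (∀ j, (n + 1) / 2 ≤ j → ∀ β ∈ ElevatedSet q j, ¬ β <:+: γ) ∧ w = γ ++ [0]}

/-- The cross-bifix-free candidate set CBFS_q(n). -/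
def CBFS (q n : ℕ) : Set (List ℕ) := SetA q n ∪ SetB q n ∪ SetC q n

/-- A word is bifix-free if no nonempty proper prefix of it is also a suffix of it. -/
def BifixFree (w : List ℕ) : Prop :=
  ∀ u, u <+: w → u ≠ [] → u.length < w.length → ¬ u <:+ w

/-- BF_q(n): the set of bifix-free words of length n over Z_q. -/
def BF (q n : ℕ) : Set (List ℕ) := {w | w.length = n ∧ (∀ a ∈ w, a < q) ∧ BifixFree w}

/-- F_{k,q}(n): the number of words of length n over Z_q avoiding k consecutive 0's. -/
noncomputable def Fcount (k q n : ℕ) : ℕ :=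
  {w : List ℕ | w.length = n ∧ (∀ a ∈ w, a < q) ∧ ¬ List.replicate k 0 <:+: w}.ncard

/-- The set S_{k,q}(n) of Bajic--Stojanovic--Chee--Kiah type words: words s of length n
over Z_q with s₁ = ⋯ = s_k = 0, s_{k+1} ≠ 0, s_n ≠ 0, and such that the subword
s_{k+2} ⋯ s_{n-1} contains no k consecutive 0's. -/
def SetS (q k n : ℕ) : Set (List ℕ) :=
  {s | s.length = n ∧ (∀ a ∈ s, a < q) ∧ s.take k = List.replicate k 0 ∧
    s.getD k 0 ≠ 0 ∧ s.getLast? ≠ some 0 ∧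
    ¬ List.replicate k 0 <:+: (s.drop (k + 1)).take (n - k - 2)}

@[simp] lemma vsum_nil : vsum [] = 0 := rfl

@[simp] lemma vsum_cons (a : ℕ) (w : List ℕ) : vsum (a :: w) = mval a + vsum w := by
  simp [vsum]

@[simp] lemma vsum_append (u v : List ℕ) : vsum (u ++ v) = vsum u + vsum v := by
  simp [vsum]

@[simp] lemma mval_one : mval 1 = 1 := rfl

@[simp] lemma mval_zero : mval 0 = -1 := rfl

lemma eq_one_of_one_le_mval {a : ℕ} (h : 1 ≤ mval a) : a = 1 := by
  unfold mval at h; split_ifs at h <;> first | assumption | norm_num at h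

lemma eq_zero_of_mval_le_neg_one {a : ℕ} (h : mval a ≤ -1) : a = 0 := by
  unfold mval at h; split_ifs at h <;> first | assumption | norm_num at h

def height (w : List ℕ) (p : ℕ) : ℤ := vsum (w.take p)

@[simp] lemma height_zero (w : List ℕ) : height w 0 = 0 := by simp [height]

lemma height_cons_succ (a : ℕ) (w : List ℕ) (p : ℕ) :
    height (a :: w) (p + 1) = mval a + height w p := by
  rw [height, List.take_succ_cons, vsum_cons, height]

lemma height_of_length_le {w : List ℕ} {p : ℕ} (h : w.length ≤ p) : height w p = vsum w := by
  rw [height, List.take_of_length_le h]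

lemma height_add (w : List ℕ) (a p : ℕ) :
    height w (a + p) = height w a + height (w.drop a) p := by
  rw [height, height, height, List.take_add, vsum_append]

lemma height_take (w : List ℕ) (a p : ℕ) : height (w.take a) p = height w (min p a) := by
  rw [height, height, List.take_take]

lemma height_append_of_le {u v : List ℕ} {p : ℕ} (h : p ≤ u.length) :
    height (u ++ v) p = height u p := by
  rw [height, height, List.take_append_of_le_length h]

lemma height_append_append {α e : List ℕ} (δ : List ℕ) {p : ℕ} (hp : p ≤ e.length) :
    height (α ++ e ++ δ) (α.length + p) = vsum α + height e p := by
  rw [height_add, List.append_assoc, List.drop_left, height_append_of_le hp,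
    height_append_of_le le_rfl, height_of_length_le le_rfl]

lemma mem_motzkinSet_iff {q n : ℕ} {w : List ℕ} :
    w ∈ MotzkinSet q n ↔
      w.length = n ∧ (∀ a ∈ w, a < q) ∧ (∀ p, 0 ≤ height w p) ∧ vsum w = 0 := by
  refine ⟨fun ⟨hl, hq, hpre, hz⟩ => ⟨hl, hq, fun p => hpre _ (List.take_prefix p w), hz⟩,
    fun ⟨hl, hq, hh, hz⟩ => ⟨hl, hq, fun u hu => ?_, hz⟩⟩
  rw [List.prefix_iff_eq_take.mp hu]
  exact hh _

lemma append_mem_motzkinSet {q a b : ℕ} {u v : List ℕ}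
    (hu : u ∈ MotzkinSet q a) (hv : v ∈ MotzkinSet q b) : u ++ v ∈ MotzkinSet q (a + b) := by
  rw [mem_motzkinSet_iff] at hu hv ⊢
  obtain ⟨hul, huq, huh, huz⟩ := hu
  obtain ⟨hvl, hvq, hvh, hvz⟩ := hv
  refine ⟨by simp [hul, hvl], fun x hx => (List.mem_append.1 hx).elim (huq x) (hvq x),
    fun p => ?_, by simp [huz, hvz]⟩
  rcases le_total p u.length with hp | hp
  · rw [height_append_of_le hp]
    exact huh p
  · obtain ⟨r, rfl⟩ := Nat.exists_eq_add_of_le hp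
    rw [height_add, List.drop_left, height_append_of_le le_rfl, height_of_length_le le_rfl, huz,
      zero_add]
    exact hvh r

lemma take_mem_motzkinSet {q m i : ℕ} {γ : List ℕ} (hγ : γ ∈ MotzkinSet q m) (hi : i ≤ m)
    (h0 : height γ i = 0) : γ.take i ∈ MotzkinSet q i := by
  obtain ⟨hl, hlt, hh, -⟩ := mem_motzkinSet_iff.1 hγ
  exact mem_motzkinSet_iff.2 ⟨by simp [hl, hi], fun a ha => hlt a (List.mem_of_mem_take ha),
    fun p => height_take γ i p ▸ hh _, h0⟩

lemma drop_mem_motzkinSet {q m i : ℕ} {γ : List ℕ} (hγ : γ ∈ MotzkinSet q m)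
    (h0 : height γ i = 0) : γ.drop i ∈ MotzkinSet q (m - i) := by
  obtain ⟨hl, hlt, hh, hz⟩ := mem_motzkinSet_iff.1 hγ
  refine mem_motzkinSet_iff.2 ⟨by simp [hl], fun a ha => hlt a (List.mem_of_mem_drop ha),
    fun p => ?_, ?_⟩
  · simpa [height_add, h0] using hh (i + p)
  · rw [← List.take_append_drop i γ, vsum_append] at hz
    rwa [← height, h0, zero_add] at hz

lemma finite_motzkinSet (q n : ℕ) : (MotzkinSet q n).Finite := by
  refine ((List.finite_length_eq (Fin q) n).image (List.map Fin.val)).subset ?_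
  rintro w ⟨hl, hlt, -⟩
  exact ⟨w.attach.map fun a => ⟨a.1, hlt a.1 a.2⟩, by simpa using hl, by simp⟩

def IsArch (f : ℕ → ℤ) (a b : ℕ) : Prop :=
  f a = 0 ∧ f b = 0 ∧ ∀ p, a < p → p < b → 1 ≤ f p

lemma IsArch.eq_of_overlap {f : ℕ → ℤ} {a b c d : ℕ} (h : IsArch f a b) (h' : IsArch f c d)
    (hcb : c < b) (had : a < d) : a = c ∧ b = d := by
  obtain ⟨ha, hb, hpos⟩ := h
  obtain ⟨hc, hd, hpos'⟩ := h'
  have hac : a = c := by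
    rcases lt_trichotomy a c with h | h | h
    · linarith [hpos c h hcb]
    · exact h
    · linarith [hpos' a h had]
  subst hac
  refine ⟨rfl, ?_⟩
  rcases lt_trichotomy b d with h | h | h
  · linarith [hpos' b (by omega) h]
  · exact h
  · linarith [hpos d (by omega) h]

-- The arch runs from the last zero of `f` at or before `i` to its first zero at or after `i + j`.
lemma exists_isArch_of_excursion {f : ℕ → ℤ} {m i j : ℕ} (hf : ∀ p, 0 ≤ f p) (h0 : f 0 = 0)
    (hm : f m = 0) (hij : i + j ≤ m) (hexc : ∀ p, 0 < p → p < j → f i < f (i + p)) :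
    ∃ a b, a ≤ i ∧ i + j ≤ b ∧ b ≤ m ∧ IsArch f a b := by
  classical
  have hm' : f (i + j + (m - (i + j))) = 0 := by rwa [Nat.add_sub_cancel' hij]
  have hb : ∃ d, f (i + j + d) = 0 := ⟨_, hm'⟩
  refine ⟨Nat.findGreatest (f · = 0) i, i + j + Nat.find hb, Nat.findGreatest_le i,
    Nat.le_add_right _ _, ?_, Nat.findGreatest_spec (P := (f · = 0)) (Nat.zero_le i) h0,
    Nat.find_spec hb, fun p hap hpb => ?_⟩
  · have := Nat.find_min' hb hm'
    omega
  rcases le_or_gt p i with hpi | hpi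
  · have := Nat.findGreatest_is_greatest hap hpi
    have := hf p
    omega
  rcases lt_or_ge p (i + j) with hpj | hpj
  · have := hexc (p - i) (by omega) (by omega)
    rw [Nat.add_sub_cancel' hpi.le] at this
    have := hf i
    omega
  · have := Nat.find_min hb (show p - (i + j) < Nat.find hb by omega)
    rw [Nat.add_sub_cancel' hpj] at this
    have := hf p
    omega

lemma isArch_height_of_mem_elevatedSet {q k : ℕ} {e : List ℕ} (he : e ∈ ElevatedSet q k) :
    e.length = k ∧ 2 ≤ k ∧ IsArch (height e) 0 k := by
  obtain ⟨hl, β, hβ, rfl⟩ := he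
  obtain ⟨-, -, hβh, hβz⟩ := mem_motzkinSet_iff.1 hβ
  have hlen : β.length + 2 = k := by simpa using hl
  refine ⟨hl, by omega, height_zero _, ?_, fun p hp hpk => ?_⟩
  · simp [height_of_length_le hl.le, hβz]
  · obtain ⟨r, rfl⟩ := Nat.exists_eq_add_of_le' hp
    rw [height_cons_succ, height_append_of_le (by omega), mval_one]
    linarith [hβh r]

lemma mem_elevatedSet_of_isArch {q k : ℕ} {e : List ℕ} (hl : e.length = k) (hk : 2 ≤ k)
    (hlt : ∀ a ∈ e, a < q) (harch : IsArch (height e) 0 k) : e ∈ ElevatedSet q k := by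
  obtain ⟨-, hz, hpos⟩ := harch
  rw [height_of_length_le hl.le] at hz
  obtain ⟨a, u, rfl⟩ := List.exists_cons_of_length_pos (show 0 < e.length by omega)
  have hu : u ≠ [] := List.ne_nil_of_length_pos (by simp at hl; omega)
  obtain ⟨β, b, rfl⟩ : ∃ β b, u = β ++ [b] :=
    ⟨u.dropLast, u.getLast hu, (List.dropLast_append_getLast hu).symm⟩
  have hlen : β.length + 2 = k := by simpa using hl
  have ha : a = 1 := eq_one_of_one_le_mval (by simpa [height] using hpos 1 one_pos (by omega))
  subst ha
  have hβ_pos (p : ℕ) (hp : p ≤ β.length) : 0 ≤ height β p := by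
    rcases Nat.eq_zero_or_pos p with rfl | hp0
    · simp
    have := hpos (p + 1) (by omega) (by omega)
    rw [height_cons_succ, height_append_of_le hp, mval_one] at this
    linarith
  have hβz : 0 ≤ vsum β := height_of_length_le le_rfl ▸ hβ_pos _ le_rfl
  have hb : b = 0 := eq_zero_of_mval_le_neg_one (by simp at hz; omega)
  subst hb
  refine ⟨hl, β, mem_motzkinSet_iff.2 ⟨by omega,
    fun x hx => hlt x (by simp [hx]), fun p => ?_, by simp at hz; omega⟩, rfl⟩
  rcases le_total p β.length with hp | hp
  · exact hβ_pos p hp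
  · rw [height_of_length_le hp]; exact hβz

lemma elevatedSet_subset_motzkinSet {q k : ℕ} (hq : 1 < q) :
    ElevatedSet q k ⊆ MotzkinSet q k := by
  intro e he
  obtain ⟨hl, -, -, hz, hpos⟩ := isArch_height_of_mem_elevatedSet he
  obtain ⟨-, β, hβ, rfl⟩ := he
  refine mem_motzkinSet_iff.2 ⟨hl, fun a ha => ?_, fun p => ?_, ?_⟩
  · simp only [List.mem_cons, List.mem_append, List.not_mem_nil, or_false] at ha
    rcases ha with rfl | ha | rfl
    exacts [hq, hβ.2.1 a ha, by omega]
  · rcases Nat.eq_zero_or_pos p with rfl | hp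
    · simp
    rcases lt_or_ge p k with hpk | hpk
    · exact (hpos p hp hpk).trans' zero_le_one
    · rw [← hz, height_of_length_le (by omega), height_of_length_le (by omega)]
  · rwa [← height_of_length_le hl.le]

def ArchSet (q m i k : ℕ) : Set (List ℕ) :=
  {w | ∃ α ∈ MotzkinSet q i, ∃ e ∈ ElevatedSet q k, ∃ δ ∈ MotzkinSet q (m - i - k),
    w = α ++ e ++ δ}

lemma archSet_subset_motzkinSet {q m i k : ℕ} (hq : 1 < q) (hik : i + k ≤ m) :
    ArchSet q m i k ⊆ MotzkinSet q m := by
  rintro w ⟨α, hα, e, he, δ, hδ, rfl⟩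
  have := append_mem_motzkinSet (append_mem_motzkinSet hα (elevatedSet_subset_motzkinSet hq he)) hδ
  rwa [show i + k + (m - i - k) = m by omega] at this

lemma archSet_eq_image {q m i k : ℕ} (hk : 2 ≤ k) :
    ArchSet q m i k = (fun x : List ℕ × List ℕ × List ℕ => x.1 ++ (1 :: (x.2.1 ++ [0])) ++ x.2.2) ''
      (MotzkinSet q i ×ˢ MotzkinSet q (k - 2) ×ˢ MotzkinSet q (m - i - k)) := by
  ext w
  constructor
  · rintro ⟨α, hα, e, ⟨-, β, hβ, rfl⟩, δ, hδ, rfl⟩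
    exact ⟨(α, β, δ), ⟨hα, hβ, hδ⟩, rfl⟩
  · rintro ⟨⟨α, β, δ⟩, ⟨hα, hβ, hδ⟩, rfl⟩
    exact ⟨α, hα, _, ⟨by simp [hβ.1]; omega, β, hβ, rfl⟩, δ, hδ, rfl⟩

lemma finite_archSet {q m i k : ℕ} (hk : 2 ≤ k) : (ArchSet q m i k).Finite := by
  rw [archSet_eq_image hk]
  exact ((finite_motzkinSet q i).prod
    ((finite_motzkinSet q (k - 2)).prod (finite_motzkinSet q (m - i - k)))).image _

lemma ncard_archSet {q m i k : ℕ} (hk : 2 ≤ k) :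
    (ArchSet q m i k).ncard = Mnum q i * Mnum q (k - 2) * Mnum q (m - i - k) := by
  rw [archSet_eq_image hk, Set.InjOn.ncard_image, Set.ncard_prod, Set.ncard_prod, Mnum, Mnum,
    Mnum, mul_assoc]
  rintro ⟨α, β, δ⟩ ⟨hα, hβ, -⟩ ⟨α', β', δ'⟩ ⟨hα', hβ', -⟩ h
  obtain ⟨rfl, htail⟩ := List.append_inj (by simpa using h) (hα.1.trans hα'.1.symm)
  obtain ⟨rfl, hδ⟩ := List.append_inj (List.cons.inj htail).2 (hβ.1.trans hβ'.1.symm)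
  cases hδ
  rfl

lemma isArch_height_of_mem_archSet {q m i k : ℕ} {γ : List ℕ} (hγ : γ ∈ ArchSet q m i k) :
    IsArch (height γ) i (i + k) := by
  obtain ⟨α, hα, e, he, δ, -, rfl⟩ := hγ
  obtain ⟨hαl, -, -, hαz⟩ := mem_motzkinSet_iff.1 hα
  obtain ⟨hel, -, -, hk, hpos⟩ := isArch_height_of_mem_elevatedSet he
  have key (p : ℕ) (hp : p ≤ k) : height (α ++ e ++ δ) (i + p) = height e p := by
    rw [← hαl, height_append_append δ (hel ▸ hp), hαz, zero_add]
  refine ⟨by simpa using key 0 (Nat.zero_le k), by rw [key k le_rfl, hk],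
    fun p hip hpk => ?_⟩
  obtain ⟨r, rfl⟩ := Nat.exists_eq_add_of_lt hip
  rw [add_assoc, key (r + 1) (by omega)]
  exact hpos (r + 1) r.succ_pos (by omega)

lemma mem_archSet_of_isArch {q m i k : ℕ} {γ : List ℕ} (hγ : γ ∈ MotzkinSet q m)
    (hk : 2 ≤ k) (hik : i + k ≤ m) (harch : IsArch (height γ) i (i + k)) :
    γ ∈ ArchSet q m i k := by
  obtain ⟨hi0, hk0, hpos⟩ := harch
  obtain ⟨hl, hlt, -, -⟩ := mem_motzkinSet_iff.1 hγ
  have hdrop (p : ℕ) : height (γ.drop i) p = height γ (i + p) := by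
    rw [height_add, hi0, zero_add]
  have hpos' (p : ℕ) (hp : 0 < p) (hpk : p < k) : 1 ≤ height ((γ.drop i).take k) p := by
    rw [height_take, min_eq_left hpk.le, hdrop]
    exact hpos _ (by omega) (by omega)
  refine ⟨γ.take i, take_mem_motzkinSet hγ (by omega) hi0, (γ.drop i).take k,
    mem_elevatedSet_of_isArch (by simp [hl]; omega) hk
      (fun a ha => hlt a (List.mem_of_mem_drop (List.mem_of_mem_take ha)))
      ⟨height_zero _, by rw [height_take, min_self, hdrop, hk0], hpos'⟩,
    γ.drop (i + k), Nat.sub_sub m i k ▸ drop_mem_motzkinSet hγ hk0, ?_⟩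
  rw [← List.take_add, List.take_append_drop]

lemma exists_archSet_of_infix {q m j : ℕ} {γ e : List ℕ} (hγ : γ ∈ MotzkinSet q m)
    (he : e ∈ ElevatedSet q j) (hinf : e <:+: γ) :
    ∃ i k, j ≤ k ∧ i + k ≤ m ∧ γ ∈ ArchSet q m i k := by
  obtain ⟨s, r, rfl⟩ := hinf
  obtain ⟨hl, -, hh, hz⟩ := mem_motzkinSet_iff.1 hγ
  obtain ⟨hel, hj, -, -, hpos⟩ := isArch_height_of_mem_elevatedSet he
  have key (p : ℕ) (hp : p ≤ j) := height_append_append r (α := s) (hel ▸ hp)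
  have hs : height (s ++ e ++ r) s.length = vsum s := by simpa using key 0 (Nat.zero_le j)
  obtain ⟨a, b, has, hjb, hbm, harch⟩ := exists_isArch_of_excursion (m := m) (i := s.length)
    (j := j) hh (height_zero _) (by rw [← hl, height_of_length_le le_rfl, hz]) (by simp [← hl, hel])
    (fun p hp hpj => by linarith [key p hpj.le, hpos p hp hpj])
  refine ⟨a, b - a, by omega, by omega, mem_archSet_of_isArch hγ (by omega) (by omega) ?_⟩
  rwa [Nat.add_sub_cancel' (by omega)]

def archIndex (t m : ℕ) : Finset (Σ _ : ℕ, ℕ) :=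
  (Finset.Icc t m).sigma fun k => Finset.range (m + 1 - k)

lemma mem_archIndex {t m k i : ℕ} :
    (⟨k, i⟩ : Σ _ : ℕ, ℕ) ∈ archIndex t m ↔ t ≤ k ∧ i + k ≤ m := by
  simp only [archIndex, Finset.mem_sigma, Finset.mem_Icc, Finset.mem_range]
  omega

lemma setC_eq_image (q n : ℕ) :
    SetC q n = (· ++ [0]) '' (MotzkinSet q (n - 1) \
      ⋃ p ∈ archIndex ((n + 1) / 2) (n - 1), ArchSet q (n - 1) p.2 p.1) := by
  ext w
  constructor
  · rintro ⟨γ, hγ, hfree, rfl⟩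
    refine ⟨γ, ⟨hγ, ?_⟩, rfl⟩
    simp only [Set.mem_iUnion, not_exists]
    rintro ⟨k, i⟩ hp ⟨α, -, e, he, δ, -, rfl⟩
    exact hfree k (mem_archIndex.1 hp).1 e he ⟨α, δ, rfl⟩
  · rintro ⟨γ, ⟨hγ, hlong⟩, rfl⟩
    refine ⟨γ, hγ, fun j hj e he hinf => hlong ?_, rfl⟩
    obtain ⟨i, k, hjk, hik, hmem⟩ := exists_archSet_of_infix hγ he hinf
    exact Set.mem_biUnion (x := ⟨k, i⟩) (mem_archIndex.2 ⟨hj.trans hjk, hik⟩) hmem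

-- Two distinct arches occupy disjoint intervals, which is impossible for two arches of length
-- `≥ t` in a word of length `m < 2t`.
lemma pairwiseDisjoint_archSet {q m t : ℕ} (htm : m < 2 * t) :
    (archIndex t m : Set (Σ _ : ℕ, ℕ)).PairwiseDisjoint fun p => ArchSet q m p.2 p.1 := by
  rintro ⟨k, i⟩ hp ⟨k', i'⟩ hp' hne
  rw [Finset.mem_coe, mem_archIndex] at hp hp'
  refine Set.disjoint_left.2 fun γ (h : γ ∈ ArchSet q m i k) (h' : γ ∈ ArchSet q m i' k') =>
    hne ?_
  obtain ⟨rfl, hk⟩ := (isArch_height_of_mem_archSet h).eq_of_overlap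
    (isArch_height_of_mem_archSet h') (by omega) (by omega)
  obtain rfl : k = k' := by omega
  rfl

lemma ncard_biUnion_archSet {q m t : ℕ} (ht : 2 ≤ t) (htm : m < 2 * t) :
    (⋃ p ∈ archIndex t m, ArchSet q m p.2 p.1).ncard =
      ∑ k ∈ Finset.Icc t m, ∑ i ∈ Finset.range (m + 1 - k),
        Mnum q i * Mnum q (k - 2) * Mnum q (m - i - k) := by
  rw [← Finset.set_biUnion_coe, Set.Finite.ncard_biUnion (Finset.finite_toSet _)
      (fun p hp => finite_archSet (by have := (mem_archIndex.1 hp).1; omega))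
      (pairwiseDisjoint_archSet htm),
    finsum_mem_coe_finset, archIndex, Finset.sum_sigma]
  exact Finset.sum_congr rfl fun k hk => Finset.sum_congr rfl fun i _ =>
    ncard_archSet (k := k) (by have := (Finset.mem_Icc.1 hk).1; omega)

/-- |C_q(n)| = M_{q-2}(n-1) −
Σ_{k=⌈n/2⌉}^{n-1} Σ_{i=0}^{n-1-k} M_{q-2}(i)·M_{q-2}(k-2)·M_{q-2}(n-1-i-k). -/
theorem setC_card (q n : ℕ) (hq : 3 ≤ q) (hn : 3 ≤ n) :
    ((SetC q n).ncard : ℤ) = (Mnum q (n - 1) : ℤ) -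
      ∑ k ∈ Finset.Icc ((n + 1) / 2) (n - 1), ∑ i ∈ Finset.range (n - k),
        (Mnum q i : ℤ) * (Mnum q (k - 2) : ℤ) * (Mnum q (n - 1 - i - k) : ℤ) := by
  have hlong_subset : ⋃ p ∈ archIndex ((n + 1) / 2) (n - 1), ArchSet q (n - 1) p.2 p.1 ⊆
      MotzkinSet q (n - 1) :=
    Set.iUnion₂_subset fun _ hp => archSet_subset_motzkinSet (by omega) (mem_archIndex.1 hp).2
  rw [setC_eq_image, Set.ncard_image_of_injective _ (List.append_left_injective [0]),
    Set.cast_ncard_sdiff hlong_subset (finite_motzkinSet q _),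
    ncard_biUnion_archSet (by omega) (by omega), Nat.sub_add_cancel (by omega : 1 ≤ n)]
  push_cast
  rfl
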